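/- Admissible transformations within the subclass F_{I,00} (the case α = −2): let r ≥ 2, a₂, …, a_r real with a_r ≠ 0, b₀, b₂, b̃₀ real, and c₄ ≠ 0. Let I ⊆ ℝ be an open interval and T smooth on I with c₄T′(t) > 0 for all t ∈ I, satisfying (T″/T′)′ − (1/2)(T″/T′)² = 2b̃₀T′² − 2b₀ on I. Set X¹(t) = (c₄T′(t))^{1/2}. If u solves u_t + u u_x = Σ_{j=2}^r a_j x^{j−2} u_j + b₀x + b₂x^{−3} on I × (0,∞), then the transformed function ũ of u under (T, X¹, 0), i.e. ũ(T(t), X¹(t)x) = (X¹/T′)u(t,x) + (X¹′/T′)x, solves ũ_t + ũ ũ_x = Σ_{j=2}^r c₄a_j x̃^{j−2} ũ_j + b̃₀x̃ + c₄²b₂x̃^{−3} on T(I) × (0,∞). -/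

import Mathlib

open Real Set

/-- Partial derivative of `u` with respect to time. -/
noncomputable def pdt (u : ℝ → ℝ → ℝ) (t x : ℝ) : ℝ := deriv (fun s => u s x) t

/-- `j`-th partial derivative of `u` with respect to space. -/
noncomputable def pdx (u : ℝ → ℝ → ℝ) (j : ℕ) (t x : ℝ) : ℝ := iteratedDeriv j (u t) x

lemma iter_congr {f g : ℝ → ℝ} {s : Set ℝ} (hs : IsOpen s) (h : EqOn f g s) :
    ∀ (n : ℕ), ∀ x ∈ s, iteratedDeriv n f x = iteratedDeriv n g x := by
  intro n
  induction n with
  | zero => intro x hx; simpa using h hx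
  | succ n ih =>
    intro x hx
    rw [iteratedDeriv_succ, iteratedDeriv_succ]
    apply Filter.EventuallyEq.deriv_eq
    filter_upwards [hs.mem_nhds hx] with y hy using ih y hy

section scaffold
variable {f : ℝ → ℝ} {s : Set ℝ}

lemma iter_smooth (hs : IsOpen s) (h : ContDiffOn ℝ (⊤ : ℕ∞) f s) :
    ∀ (n : ℕ), ContDiffOn ℝ (⊤ : ℕ∞) (iteratedDeriv n f) s := by
  intro n
  induction n with
  | zero => simpa using h
  | succ n ih =>
    rw [iteratedDeriv_succ]
    exact ih.deriv_of_isOpen hs (by exact_mod_cast le_refl _)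

lemma iter_diff (hs : IsOpen s) (h : ContDiffOn ℝ (⊤ : ℕ∞) f s)
    (n : ℕ) {x : ℝ} (hx : x ∈ s) : DifferentiableAt ℝ (iteratedDeriv n f) x :=
  ((iter_smooth hs h n).differentiableOn (by simp)).differentiableAt
    (hs.mem_nhds hx)

lemma iter_hasDeriv (hs : IsOpen s) (h : ContDiffOn ℝ (⊤ : ℕ∞) f s)
    (n : ℕ) {x : ℝ} (hx : x ∈ s) :
    HasDerivAt (iteratedDeriv n f) (iteratedDeriv (n + 1) f x) x := by
  rw [iteratedDeriv_succ]
  exact (iter_diff hs h n hx).hasDerivAt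

lemma iter_scale (hs : IsOpen s) (h : ContDiffOn ℝ (⊤ : ℕ∞) f s)
    (a c : ℝ) : ∀ (n : ℕ), ∀ x, c * x ∈ s →
    iteratedDeriv n (fun ξ => a * f (c * ξ)) x = a * c ^ n * iteratedDeriv n f (c * x) := by
  intro n
  induction n with
  | zero => intro x hx; simp
  | succ n ih =>
    intro x hx
    rw [iteratedDeriv_succ]
    have hset : IsOpen {y : ℝ | c * y ∈ s} := hs.preimage (by continuity)
    have hev : iteratedDeriv n (fun ξ => a * f (c * ξ)) =ᶠ[nhds x]
        (fun y => a * c ^ n * iteratedDeriv n f (c * y)) := by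
      filter_upwards [hset.mem_nhds hx] with y hy using ih y hy
    rw [hev.deriv_eq]
    have hd : HasDerivAt (fun y => a * c ^ n * iteratedDeriv n f (c * y))
        (a * c ^ n * (iteratedDeriv (n + 1) f (c * x) * (c * 1))) x := by
      exact ((iter_hasDeriv hs h n hx).comp x ((hasDerivAt_id x).const_mul c)).const_mul _
    rw [hd.deriv]; ring

lemma deriv_scale_lin (hs : IsOpen s) (h : ContDiffOn ℝ (⊤ : ℕ∞) f s)
    (a b c : ℝ) {x : ℝ} (hx : c * x ∈ s) :
    HasDerivAt (fun ξ => a * f (c * ξ) + b * ξ) (a * (c * deriv f (c * x)) + b) x := by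
  have hf : DifferentiableAt ℝ f (c * x) :=
    (h.differentiableOn (by simp)).differentiableAt (hs.mem_nhds hx)
  have h1 : HasDerivAt (fun ξ => a * f (c * ξ)) (a * (deriv f (c * x) * (c * 1))) x :=
    ((hf.hasDerivAt.comp x ((hasDerivAt_id x).const_mul c))).const_mul a
  have h2 := h1.add ((hasDerivAt_id x).const_mul b)
  exact h2.congr_deriv (by ring)

lemma iter_scale_lin (hs : IsOpen s) (h : ContDiffOn ℝ (⊤ : ℕ∞) f s)
    (a b c : ℝ) (m : ℕ) {x : ℝ} (hx : c * x ∈ s) :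
    iteratedDeriv (m + 2) (fun ξ => a * f (c * ξ) + b * ξ) x
      = a * c ^ (m + 2) * iteratedDeriv (m + 2) f (c * x) := by
  have hset : IsOpen {y : ℝ | c * y ∈ s} := hs.preimage (by continuity)
  have hstep1 : iteratedDeriv (m + 2) (fun ξ => a * f (c * ξ) + b * ξ) x
      = iteratedDeriv (m + 1) (deriv (fun ξ => a * f (c * ξ) + b * ξ)) x := by
    rw [iteratedDeriv_succ']
  rw [hstep1]
  have hcongr : ∀ y ∈ {y : ℝ | c * y ∈ s},
      deriv (fun ξ => a * f (c * ξ) + b * ξ) y = (a * c) * deriv f (c * y) + b := by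
    intro y hy
    rw [(deriv_scale_lin hs h a b c hy).deriv]; ring
  rw [iter_congr hset hcongr (m + 1) x hx]
  have hkill : iteratedDeriv (m + 1) (fun y => (a * c) * deriv f (c * y) + b) x
      = iteratedDeriv (m + 1) (fun y => (a * c) * deriv f (c * y)) x := by
    rw [iteratedDeriv_succ', iteratedDeriv_succ']
    congr 1
    funext y
    exact deriv_add_const b
  rw [hkill]
  have hds : ContDiffOn ℝ (⊤ : ℕ∞) (deriv f) s :=
    h.deriv_of_isOpen hs (by exact_mod_cast le_refl _)
  rw [iter_scale hs hds (a * c) c (m + 1) x hx]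
  have : iteratedDeriv (m + 1) (deriv f) (c * x) = iteratedDeriv (m + 2) f (c * x) :=
    (congrFun (iteratedDeriv_succ' (n := m + 1) (f := f)) (c * x)).symm
  rw [this]; ring

end scaffold

set_option maxHeartbeats 2000000 in
theorem stmt7 (r : ℕ) (hr : 2 ≤ r)
    (a : ℕ → ℝ) (har : a r ≠ 0) (b0 b2 bt0 : ℝ)
    (c4 : ℝ) (hc4 : c4 ≠ 0)
    (I : Set ℝ) (hIo : IsOpen I) (hIc : I.OrdConnected)
    (T : ℝ → ℝ) (hT : ContDiffOn ℝ (⊤ : ℕ∞) T I)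
    (hT' : ∀ t ∈ I, 0 < c4 * deriv T t)
    (hTode : ∀ t ∈ I,
      deriv (fun s => deriv (deriv T) s / deriv T s) t
        - (1 / 2) * (deriv (deriv T) t / deriv T t) ^ 2
        = 2 * bt0 * (deriv T t) ^ 2 - 2 * b0)
    (X1 : ℝ → ℝ) (hX1def : ∀ t ∈ I, X1 t = (c4 * deriv T t) ^ ((1 : ℝ) / 2))
    (u : ℝ → ℝ → ℝ)
    (hu : ContDiffOn ℝ (⊤ : ℕ∞) (fun p : ℝ × ℝ => u p.1 p.2) (I ×ˢ Ioi (0 : ℝ)))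
    (hueq : ∀ t ∈ I, ∀ x ∈ Ioi (0 : ℝ),
      pdt u t x + u t x * pdx u 1 t x
        = ∑ j ∈ Finset.Icc 2 r, a j * x ^ ((j : ℝ) - 2) * pdx u j t x
          + b0 * x + b2 * x ^ (-3 : ℝ))
    (ut : ℝ → ℝ → ℝ)
    (hut : ContDiffOn ℝ (⊤ : ℕ∞) (fun p : ℝ × ℝ => ut p.1 p.2) ((T '' I) ×ˢ Ioi (0 : ℝ)))
    (hutdef : ∀ t ∈ I, ∀ x ∈ Ioi (0 : ℝ),
      ut (T t) (X1 t * x)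
        = X1 t / deriv T t * u t x + deriv X1 t / deriv T t * x) :
    ∀ tt ∈ T '' I, ∀ xt ∈ Ioi (0 : ℝ),
      pdt ut tt xt + ut tt xt * pdx ut 1 tt xt
        = ∑ j ∈ Finset.Icc 2 r, c4 * a j * xt ^ ((j : ℝ) - 2) * pdx ut j tt xt
          + bt0 * xt + c4 ^ 2 * b2 * xt ^ (-3 : ℝ) := by
  -- basic smoothness of T and its derivatives
  have hTs : ContDiffOn ℝ (⊤ : ℕ∞) T I := hT.of_le (by simp)
  have hT1 : ContDiffOn ℝ (⊤ : ℕ∞) (deriv T) I :=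
    hTs.deriv_of_isOpen hIo (by exact_mod_cast le_refl _)
  have hT2 : ContDiffOn ℝ (⊤ : ℕ∞) (deriv (deriv T)) I :=
    hT1.deriv_of_isOpen hIo (by exact_mod_cast le_refl _)
  have hT1d : ∀ s ∈ I, DifferentiableAt ℝ (deriv T) s := fun s hs =>
    (hT1.differentiableOn (by simp)).differentiableAt (hIo.mem_nhds hs)
  have hT2d : ∀ s ∈ I, DifferentiableAt ℝ (deriv (deriv T)) s := fun s hs =>
    (hT2.differentiableOn (by simp)).differentiableAt (hIo.mem_nhds hs)
  have hP0 : ∀ s ∈ I, deriv T s ≠ 0 := by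
    intro s hs
    intro h0
    have := hT' s hs
    rw [h0, mul_zero] at this
    exact lt_irrefl 0 this
  -- positivity of X1
  have hX1pos : ∀ s ∈ I, 0 < X1 s := by
    intro s hs
    rw [hX1def s hs]
    exact Real.rpow_pos_of_pos (hT' s hs) _
  have hX1sq : ∀ s ∈ I, X1 s ^ 2 = c4 * deriv T s := by
    intro s hs
    rw [hX1def s hs]
    rw [← Real.rpow_natCast ((c4 * deriv T s) ^ ((1:ℝ)/2)) 2,
      ← Real.rpow_mul (le_of_lt (hT' s hs))]
    norm_num
  -- derivative of X1
  have hX1deriv : ∀ s ∈ I,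
      HasDerivAt X1 (X1 s * (deriv (deriv T) s / deriv T s) / 2) s := by
    intro s hs
    have hps := hT' s hs
    have hq : HasDerivAt (deriv T) (deriv (deriv T) s) s := (hT1d s hs).hasDerivAt
    have hin : HasDerivAt (fun y => c4 * deriv T y) (c4 * deriv (deriv T) s) s :=
      hq.const_mul c4
    have hr : HasDerivAt (fun z : ℝ => z ^ ((1:ℝ)/2))
        ((1:ℝ)/2 * (c4 * deriv T s) ^ ((1:ℝ)/2 - 1)) (c4 * deriv T s) :=
      Real.hasDerivAt_rpow_const (Or.inl (ne_of_gt hps))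
    have hc := hr.comp s hin
    have hev : X1 =ᶠ[nhds s] (fun y => (c4 * deriv T y) ^ ((1:ℝ)/2)) := by
      filter_upwards [hIo.mem_nhds hs] with y hy using hX1def y hy
    have hder : HasDerivAt X1
        ((1:ℝ)/2 * (c4 * deriv T s) ^ ((1:ℝ)/2 - 1) * (c4 * deriv (deriv T) s)) s := by
      refine HasDerivAt.congr_of_eventuallyEq ?_ hev
      exact hc
    convert hder using 1
    have h1 : ((1:ℝ)/2 - 1) = -(1/2 : ℝ) := by norm_num
    rw [h1, Real.rpow_neg (le_of_lt hps), ← hX1def s hs]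
    have hXs := hX1pos s hs
    have hsq := hX1sq s hs
    have hps' := hP0 s hs
    field_simp
    linear_combination (deriv (deriv T) s) * hsq
  -- openness of T '' I
  have hTIopen : IsOpen (T '' I) := by
    rw [isOpen_iff_mem_nhds]
    rintro y ⟨t, ht, rfl⟩
    obtain ⟨ε, hε, hball⟩ := Metric.isOpen_iff.1 hIo t ht
    have hsub : Icc (t - ε/2) (t + ε/2) ⊆ I := by
      intro z hz
      apply hball
      rw [Metric.mem_ball, Real.dist_eq]
      rcases hz with ⟨h1, h2⟩
      rw [abs_lt]
      constructor <;> linarith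
    have hab : t - ε/2 ≤ t + ε/2 := by linarith
    have hcont : ContinuousOn T (Icc (t - ε/2) (t + ε/2)) :=
      (hT.continuousOn).mono hsub
    have hIoo : Ioo (t - ε/2) (t + ε/2) ⊆ I := fun z hz => hsub (Ioo_subset_Icc_self hz)
    have hmemIoo : t ∈ Ioo (t - ε/2) (t + ε/2) := by constructor <;> linarith
    rcases lt_or_gt_of_ne hc4 with hneg | hpos
    · -- c4 < 0 : deriv T < 0 on I, T strictly anti
      have hderiv : ∀ z ∈ interior (Icc (t - ε/2) (t + ε/2)), deriv T z < 0 := by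
        intro z hz
        rw [interior_Icc] at hz
        have := hT' z (hIoo hz)
        nlinarith
      have hanti : StrictAntiOn T (Icc (t - ε/2) (t + ε/2)) :=
        strictAntiOn_of_deriv_neg (convex_Icc _ _) hcont hderiv
      have h1 : T (t + ε/2) < T t :=
        hanti (by constructor <;> linarith) (by constructor <;> linarith) (by linarith)
      have h2 : T t < T (t - ε/2) :=
        hanti (by constructor <;> linarith) (by constructor <;> linarith) (by linarith)
      have hsub2 : Ioo (T (t + ε/2)) (T (t - ε/2)) ⊆ T '' I := by
        refine subset_trans (intermediate_value_Ioo' hab hcont) ?_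
        exact image_mono hIoo
      exact Filter.mem_of_superset (Ioo_mem_nhds h1 h2) hsub2
    · -- c4 > 0 : deriv T > 0 on I, T strictly mono
      have hderiv : ∀ z ∈ interior (Icc (t - ε/2) (t + ε/2)), 0 < deriv T z := by
        intro z hz
        rw [interior_Icc] at hz
        have := hT' z (hIoo hz)
        nlinarith
      have hmono : StrictMonoOn T (Icc (t - ε/2) (t + ε/2)) :=
        strictMonoOn_of_deriv_pos (convex_Icc _ _) hcont hderiv
      have h1 : T (t - ε/2) < T t :=
        hmono (by constructor <;> linarith) (by constructor <;> linarith) (by linarith)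
      have h2 : T t < T (t + ε/2) :=
        hmono (by constructor <;> linarith) (by constructor <;> linarith) (by linarith)
      have hsub2 : Ioo (T (t - ε/2)) (T (t + ε/2)) ⊆ T '' I := by
        refine subset_trans (intermediate_value_Ioo hab hcont) ?_
        exact image_mono hIoo
      exact Filter.mem_of_superset (Ioo_mem_nhds h1 h2) hsub2
  rintro tt ⟨t, ht, rfl⟩ xt hxt
  have hXp : 0 < X1 t := hX1pos t ht
  have hX0 : X1 t ≠ 0 := ne_of_gt hXp
  have hPne : deriv T t ≠ 0 := hP0 t ht
  obtain ⟨x, hx0, rfl⟩ : ∃ x, 0 < x ∧ xt = X1 t * x := by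
    refine ⟨xt / X1 t, div_pos hxt hXp, ?_⟩
    field_simp
  have hx : x ∈ Ioi (0:ℝ) := hx0
  have hmemp : (t, x) ∈ I ×ˢ Ioi (0:ℝ) := Set.mem_prod.2 ⟨ht, hx⟩
  have hopenp : IsOpen (I ×ˢ Ioi (0:ℝ)) := hIo.prod isOpen_Ioi
  have hdu : DifferentiableAt ℝ (fun p : ℝ × ℝ => u p.1 p.2) (t, x) :=
    (hu.differentiableOn (by simp)).differentiableAt (hopenp.mem_nhds hmemp)
  set L := fderiv ℝ (fun p : ℝ × ℝ => u p.1 p.2) (t, x) with hLdef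
  have hL : HasFDerivAt (fun p : ℝ × ℝ => u p.1 p.2) L (t, x) := hdu.hasFDerivAt
  have hL10 : HasDerivAt (fun s => u s x) (L (1, 0)) t := by
    have hcurve : HasDerivAt (fun s : ℝ => (s, x)) ((1:ℝ), (0:ℝ)) t :=
      (hasDerivAt_id t).prodMk (hasDerivAt_const t x)
    exact hL.comp_hasDerivAt t hcurve
  have hL01 : HasDerivAt (fun y => u t y) (L (0, 1)) x := by
    have hcurve : HasDerivAt (fun y : ℝ => (t, y)) ((0:ℝ), (1:ℝ)) x :=
      (hasDerivAt_const x t).prodMk (hasDerivAt_id x)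
    exact hL.comp_hasDerivAt x hcurve
  have hpdt_u : pdt u t x = L (1, 0) := hL10.deriv
  have hpdx1_u : pdx u 1 t x = L (0, 1) := by
    rw [pdx, iteratedDeriv_one]
    exact hL01.deriv
  -- the time-direction curve
  have hdivcurve : HasDerivAt (fun s => (X1 t * x) / X1 s)
      ((0 * X1 t - (X1 t * x) * (X1 t * (deriv (deriv T) t / deriv T t) / 2)) / X1 t ^ 2) t :=
    (hasDerivAt_const t (X1 t * x)).div (hX1deriv t ht) hX0
  have hxx : (X1 t * x) / X1 t = x := by field_simp
  have hγ : HasDerivAt (fun s : ℝ => (s, (X1 t * x) / X1 s))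
      ((1:ℝ), (0 * X1 t - (X1 t * x) * (X1 t * (deriv (deriv T) t / deriv T t) / 2)) / X1 t ^ 2)
      t := (hasDerivAt_id t).prodMk hdivcurve
  have hLx : HasFDerivAt (fun p : ℝ × ℝ => u p.1 p.2) L (t, (X1 t * x) / X1 t) := by
    rw [hxx]; exact hL
  have hcurveU : HasDerivAt (fun s => u s ((X1 t * x) / X1 s))
      (L (1, (0 * X1 t - (X1 t * x) * (X1 t * (deriv (deriv T) t / deriv T t) / 2)) / X1 t ^ 2))
      t := by have := hLx.comp_hasDerivAt t hγ; exact this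
  have hRd : HasDerivAt (fun s => deriv (deriv T) s / deriv T s)
      (deriv (fun s => deriv (deriv T) s / deriv T s) t) t :=
    ((hT2d t ht).div (hT1d t ht) hPne).hasDerivAt
  have hTd : HasDerivAt T (deriv T t) t :=
    ((hTs.differentiableOn (by simp)).differentiableAt
      (hIo.mem_nhds ht)).hasDerivAt
  have hQd : HasDerivAt (deriv T) (deriv (deriv T) t) t := (hT1d t ht).hasDerivAt
  have hAd : HasDerivAt (fun s => X1 s / deriv T s)
      ((X1 t * (deriv (deriv T) t / deriv T t) / 2 * deriv T t
        - X1 t * deriv (deriv T) t) / deriv T t ^ 2) t :=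
    (hX1deriv t ht).div hQd hPne
  have hNd : HasDerivAt (fun s => X1 s * (deriv (deriv T) s / deriv T s) / 2)
      ((X1 t * (deriv (deriv T) t / deriv T t) / 2 * (deriv (deriv T) t / deriv T t)
        + X1 t * deriv (fun s => deriv (deriv T) s / deriv T s) t) / 2) t :=
    ((hX1deriv t ht).mul hRd).div_const 2
  have hBd : HasDerivAt (fun s => X1 s * (deriv (deriv T) s / deriv T s) / 2 / deriv T s)
      (((X1 t * (deriv (deriv T) t / deriv T t) / 2 * (deriv (deriv T) t / deriv T t)
          + X1 t * deriv (fun s => deriv (deriv T) s / deriv T s) t) / 2 * deriv T t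
        - X1 t * (deriv (deriv T) t / deriv T t) / 2 * deriv (deriv T) t) / deriv T t ^ 2) t :=
    hNd.div hQd hPne
  have hHg := (hAd.mul hcurveU).add (hBd.mul hdivcurve)
  -- transfer to ut ∘ T
  have hev : (fun s => ut (T s) (X1 t * x)) =ᶠ[nhds t]
      (fun s => X1 s / deriv T s * u s ((X1 t * x) / X1 s)
        + X1 s * (deriv (deriv T) s / deriv T s) / 2 / deriv T s * ((X1 t * x) / X1 s)) := by
    filter_upwards [hIo.mem_nhds ht] with s hs
    have hxs : (X1 t * x) / X1 s ∈ Ioi (0:ℝ) := div_pos (mul_pos hXp hx0) (hX1pos s hs)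
    have h1 := hutdef s hs _ hxs
    have h2 : X1 s * ((X1 t * x) / X1 s) = X1 t * x := by
      rw [mul_comm]; exact div_mul_cancel₀ _ (ne_of_gt (hX1pos s hs))
    rw [h2, (hX1deriv s hs).deriv] at h1
    rw [h1]
  have hHf := HasDerivAt.congr_of_eventuallyEq hHg hev
  have hduT : DifferentiableAt ℝ (fun p : ℝ × ℝ => ut p.1 p.2) (T t, X1 t * x) :=
    (hut.differentiableOn (by simp)).differentiableAt
      ((hTIopen.prod isOpen_Ioi).mem_nhds (Set.mem_prod.2 ⟨⟨t, ht, rfl⟩, hxt⟩))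
  have hGd : DifferentiableAt ℝ (fun τ => ut τ (X1 t * x)) (T t) :=
    by have := hduT.comp (T t) ((differentiableAt_id (𝕜 := ℝ) (x := T t)).prodMk (differentiableAt_const (X1 t * x))); exact this
  have hG : HasDerivAt (fun τ => ut τ (X1 t * x)) (pdt ut (T t) (X1 t * x)) (T t) :=
    hGd.hasDerivAt
  have hchain : HasDerivAt (fun s => ut (T s) (X1 t * x))
      (pdt ut (T t) (X1 t * x) * deriv T t) t := hG.comp t hTd
  have hkey := hchain.unique hHf
  have hpdtval := (eq_div_iff hPne).mpr hkey
  have hLlin : ∀ w : ℝ, L (1, w) = L (1, 0) + w * L (0, 1) := by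
    intro w
    have h1 : ((1:ℝ), w) = ((1:ℝ), (0:ℝ)) + w • ((0:ℝ), (1:ℝ)) := by
      simp [Prod.ext_iff]
    rw [h1, map_add, map_smul, smul_eq_mul]
  rw [hLlin _, hxx] at hpdtval
  -- slice smoothness of u t
  have su : ContDiffOn ℝ (⊤ : ℕ∞) (u t) (Ioi (0:ℝ)) := by
    have h1 : ContDiffOn ℝ (⊤ : ℕ∞)
        ((fun p : ℝ × ℝ => u p.1 p.2) ∘ (fun y => (t, y))) (Ioi (0:ℝ)) :=
      (hu.of_le (by simp)).comp ((contDiff_const.prodMk contDiff_id).contDiffOn)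
        (fun y hy => Set.mem_prod.2 ⟨ht, hy⟩)
    exact h1
  -- slice identity for ut (T t)
  have hcanc : (X1 t)⁻¹ * (X1 t * x) = x := inv_mul_cancel_left₀ hX0 x
  have hkEq : EqOn (ut (T t))
      (fun ξ => (X1 t / deriv T t) * u t ((X1 t)⁻¹ * ξ)
        + ((deriv (deriv T) t / deriv T t) / (2 * deriv T t)) * ξ) (Ioi (0:ℝ)) := by
    intro ξ hξ
    have hξp : (0:ℝ) < ξ := hξ
    have hξ' : ξ / X1 t ∈ Ioi (0:ℝ) := div_pos hξp hXp
    have h1 := hutdef t ht _ hξ'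
    have h2 : X1 t * (ξ / X1 t) = ξ := by
      rw [mul_comm]; exact div_mul_cancel₀ _ hX0
    rw [h2, (hX1deriv t ht).deriv] at h1
    show ut (T t) ξ = (X1 t / deriv T t) * u t ((X1 t)⁻¹ * ξ)
        + ((deriv (deriv T) t / deriv T t) / (2 * deriv T t)) * ξ
    rw [h1]
    have h3 : (X1 t)⁻¹ * ξ = ξ / X1 t := by ring
    rw [h3]
    field_simp
  have hmemx : X1 t * x ∈ Ioi (0:ℝ) := mem_Ioi.2 (mul_pos hXp hx0)
  have hutval : ut (T t) (X1 t * x)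
      = (X1 t / deriv T t) * u t x
        + ((deriv (deriv T) t / deriv T t) / (2 * deriv T t)) * (X1 t * x) := by
    have h1 : ut (T t) (X1 t * x)
        = (X1 t / deriv T t) * u t ((X1 t)⁻¹ * (X1 t * x))
          + ((deriv (deriv T) t / deriv T t) / (2 * deriv T t)) * (X1 t * x) :=
      hkEq hmemx
    rwa [hcanc] at h1
  have hmem2 : (X1 t)⁻¹ * (X1 t * x) ∈ Ioi (0:ℝ) := by rw [hcanc]; exact hx
  have hpdx1ut : pdx ut 1 (T t) (X1 t * x)
      = (X1 t / deriv T t) * ((X1 t)⁻¹ * L (0, 1))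
        + (deriv (deriv T) t / deriv T t) / (2 * deriv T t) := by
    rw [pdx, iteratedDeriv_one]
    have hev2 : (ut (T t)) =ᶠ[nhds (X1 t * x)]
        (fun ξ => (X1 t / deriv T t) * u t ((X1 t)⁻¹ * ξ)
          + ((deriv (deriv T) t / deriv T t) / (2 * deriv T t)) * ξ) := by
      filter_upwards [isOpen_Ioi.mem_nhds hmemx] with ξ hξ using hkEq hξ
    rw [hev2.deriv_eq]
    have hd := (deriv_scale_lin isOpen_Ioi su (X1 t / deriv T t)
      ((deriv (deriv T) t / deriv T t) / (2 * deriv T t)) (X1 t)⁻¹ hmem2).deriv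
    rw [hd, hcanc]
    have hder : deriv (u t) x = L (0, 1) := hL01.deriv
    rw [hder]
  have hpdxjut : ∀ j ∈ Finset.Icc 2 r, pdx ut j (T t) (X1 t * x)
      = (X1 t / deriv T t) * ((X1 t)⁻¹) ^ j * pdx u j t x := by
    intro j hj
    obtain ⟨m, rfl⟩ : ∃ m, j = m + 2 := ⟨j - 2, by have := (Finset.mem_Icc.1 hj).1; omega⟩
    rw [pdx]
    rw [iter_congr isOpen_Ioi hkEq (m + 2) _ hmemx]
    rw [iter_scale_lin isOpen_Ioi su _ _ _ m hmem2, hcanc]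
    rfl
  have hueq' := hueq t ht x hx
  rw [hpdt_u, hpdx1_u] at hueq'
  have hterm : ∀ j ∈ Finset.Icc 2 r,
      c4 * a j * (X1 t * x) ^ ((j:ℝ) - 2) * pdx ut j (T t) (X1 t * x)
        = X1 t / deriv T t ^ 2 * (a j * x ^ ((j:ℝ) - 2) * pdx u j t x) := by
    intro j hj
    rw [hpdxjut j hj, Real.mul_rpow hXp.le hx0.le]
    have e1 : ((X1 t)⁻¹ : ℝ) ^ j = X1 t ^ (-(j:ℝ)) := by
      rw [Real.rpow_neg hXp.le, Real.rpow_natCast, inv_pow]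
    have e2 : X1 t ^ ((j:ℝ) - 2) * X1 t ^ (-(j:ℝ)) = (X1 t ^ 2)⁻¹ := by
      rw [← Real.rpow_add hXp]
      have h3 : (j:ℝ) - 2 + -(j:ℝ) = -((2:ℕ):ℝ) := by push_cast; ring
      rw [h3, Real.rpow_neg hXp.le, Real.rpow_natCast]
    rw [e1]
    have hsq := hX1sq t ht
    have h4 : c4 * (X1 t ^ ((j:ℝ) - 2) * X1 t ^ (-(j:ℝ))) * (X1 t / deriv T t)
        = X1 t / deriv T t ^ 2 := by
      rw [e2, hsq]
      field_simp
    linear_combination (a j * x ^ ((j:ℝ) - 2) * pdx u j t x) * h4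
  have hsum : ∑ j ∈ Finset.Icc 2 r,
      c4 * a j * (X1 t * x) ^ ((j:ℝ) - 2) * pdx ut j (T t) (X1 t * x)
      = X1 t / deriv T t ^ 2
        * (L (1, 0) + u t x * L (0, 1) - b0 * x - b2 * x ^ (-3:ℝ)) := by
    rw [Finset.sum_congr rfl hterm, ← Finset.mul_sum]
    congr 1
    linarith [hueq']
  have hrho : (X1 t * x) ^ (-3:ℝ) = (X1 t ^ 3)⁻¹ * x ^ (-3:ℝ) := by
    rw [Real.mul_rpow hXp.le hx0.le]
    congr 1
    rw [show (-3:ℝ) = -((3:ℕ):ℝ) by norm_num, Real.rpow_neg hXp.le, Real.rpow_natCast]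
  -- final assembly
  rw [hsum, hpdtval, hutval, hpdx1ut, hrho]
  have hDval : deriv (fun s => deriv (deriv T) s / deriv T s) t
      = 1 / 2 * (deriv (deriv T) t / deriv T t) ^ 2 + 2 * bt0 * deriv T t ^ 2 - 2 * b0 := by
    linarith [hTode t ht]
  rw [hDval]
  have hc4eq : c4 = X1 t ^ 2 / deriv T t := by
    rw [eq_div_iff hPne]; linarith [hX1sq t ht]
  rw [hc4eq]
  have hxne : x ≠ 0 := ne_of_gt hx0
  field_simp
  ring
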